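/- Let n > 5f. If some honest server accepts transaction t on the fast path (observing > (n+3f)/2 acknowledgements for t) and the underlying consensus instance satisfies validity (if all honest servers propose the same value, that value is decided), then the consensus instance, if invoked, decides t; hence no honest server accepts a transaction conflicting with t (Agreement of Consensus on Demand). -/

import Mathlib

/-!
Inside the `n` servers, the fast-path certificate `A` for `t` and an honest server's sample `Q`
overlap in at least `|A| + |Q| - n` servers; at most `f` of them are Byzantine and the others
acknowledged `t`. As `2|A| > n + 3f` and `|Q| ≥ n - f`, this leaves more than `|Q|/2`
acknowledgements of `t` in `Q`, so `t` is the only plurality value of every honest sample: all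
honest servers propose `t`, and validity decides it.
-/

namespace Finset

variable {α β : Type*}

theorem card_add_card_le_card_inter_add_card [DecidableEq α] {s t u : Finset α} (hs : s ⊆ u)
    (ht : t ⊆ u) :
    #s + #t ≤ #(s ∩ t) + #u := by
  rw [← card_inter_add_card_union]
  exact Nat.add_le_add_left (card_le_card (union_subset hs ht)) _

theorem card_add_card_le_card_filter_add [DecidableEq α] {S A B Q : Finset α} (hA : A ⊆ S)
    (hQ : Q ⊆ S) (g : α → β) [DecidableEq β] {b : β} (hAB : ∀ x ∈ A \ B, g x = b) :
    #A + #Q ≤ #(Q.filter (g · = b)) + #S + #B := by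
  have hsub : (A ∩ Q) \ B ⊆ Q.filter (g · = b) := fun x hx => by
    obtain ⟨hxAQ, hxB⟩ := mem_sdiff.1 hx
    exact mem_filter.2 ⟨(mem_inter.1 hxAQ).2, hAB x (mem_sdiff.2 ⟨(mem_inter.1 hxAQ).1, hxB⟩)⟩
  calc #A + #Q ≤ #(A ∩ Q) + #S := card_add_card_le_card_inter_add_card hA hQ
    _ ≤ #((A ∩ Q) \ B) + #B + #S := Nat.add_le_add_right card_le_card_sdiff_add_card _
    _ ≤ #(Q.filter (g · = b)) + #S + #B := by
      have := card_le_card hsub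
      omega

theorem eq_of_lt_two_mul_card_filter_of_card_filter_le {s : Finset α} (g : α → β)
    [DecidableEq β] {a b : β} (hmaj : #s < 2 * #(s.filter (g · = a)))
    (hle : #(s.filter (g · = a)) ≤ #(s.filter (g · = b))) : b = a := by
  by_contra hba
  have hsub : s.filter (g · = b) ⊆ s.filter (fun x => ¬ g x = a) :=
    monotone_filter_right s fun _ _ hx => hx ▸ hba
  have := card_le_card hsub
  have := card_filter_add_card_filter_not (s := s) (fun x => g x = a)
  omega

end Finset

theorem cod_agreement_general {α T : Type*} [DecidableEq α] [DecidableEq T]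
    (n f : ℕ)
    (Srv : Finset α) (hSrv : Srv.card = n)
    (B : Finset α) (hBcard : B.card ≤ f)
    (ack : α → T) (t : T)
    -- fast path: some honest server observes > (n+3f)/2 acknowledgements for t
    (A : Finset α) (hA : A ⊆ Srv)
    (hAack : ∀ s ∈ A \ B, ack s = t)
    (hAcard : ((A.card : ℚ)) > ((n : ℚ) + 3 * f) / 2)
    -- each honest server q falling back to consensus collects a quorum Q q
    -- of at least n - f acknowledgements and proposes a plurality value
    (Q : α → Finset α) (hQ : ∀ q ∈ Srv \ B, Q q ⊆ Srv ∧ (Q q).card ≥ n - f)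
    (propose : α → T)
    (hplur : ∀ q ∈ Srv \ B, ∀ v : T,
      ((Q q).filter (fun s => ack s = v)).card ≤
        ((Q q).filter (fun s => ack s = propose q)).card)
    -- the underlying consensus satisfies validity
    (decide : T)
    (validity : ∀ v : T, (∀ q ∈ Srv \ B, propose q = v) → decide = v) :
    decide = t := by
  have hfast : n + 3 * f < 2 * A.card := by
    have : (n : ℚ) + 3 * f < 2 * A.card := by linarith
    exact_mod_cast this
  refine validity t fun q hq => ?_
  obtain ⟨hQS, hQcard⟩ := hQ q hq
  have hcount := Finset.card_add_card_le_card_filter_add hA hQS ack hAack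
  have hmaj : (Q q).card < 2 * ((Q q).filter (fun s => ack s = t)).card := by omega
  exact Finset.eq_of_lt_two_mul_card_filter_of_card_filter_le ack hmaj (hplur q hq t)

theorem cod_agreement {α T : Type*} [DecidableEq α] [DecidableEq T]
    (n f : ℕ) (h : n > 5 * f)
    (Srv : Finset α) (hSrv : Srv.card = n)
    (B : Finset α) (hB : B ⊆ Srv) (hBcard : B.card ≤ f)
    (ack : α → T) (t : T)
    -- fast path: some honest server observes > (n+3f)/2 acknowledgements for t
    (A : Finset α) (hA : A ⊆ Srv)
    (hAack : ∀ s ∈ A \ B, ack s = t)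
    (hAcard : ((A.card : ℚ)) > ((n : ℚ) + 3 * f) / 2)
    -- each honest server q falling back to consensus collects a quorum Q q
    -- of at least n - f acknowledgements and proposes a plurality value
    (Q : α → Finset α) (hQ : ∀ q ∈ Srv \ B, Q q ⊆ Srv ∧ (Q q).card ≥ n - f)
    (propose : α → T)
    (hplur : ∀ q ∈ Srv \ B, ∀ v : T,
      ((Q q).filter (fun s => ack s = v)).card ≤
        ((Q q).filter (fun s => ack s = propose q)).card)
    -- the underlying consensus satisfies validity
    (decide : T)
    (validity : ∀ v : T, (∀ q ∈ Srv \ B, propose q = v) → decide = v) :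
    decide = t :=
  cod_agreement_general n f Srv hSrv B hBcard ack t A hA hAack hAcard Q hQ propose hplur decide
    validity
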